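/- (Empirical-Bernstein supermartingale.) Let c > 0. Suppose E[δ̂_t | 𝒢_{t−1}] = δ_t and |δ̂_t| ≤ c/2 a.s. for every t ≥ 1, and let (γ_t)_{t≥1} be a [−c/2, c/2]-valued predictable process. Then for every λ ∈ [0, 1/c) the process L_t(λ) = exp( λ Σ_{i=1}^t (δ̂_i − δ_i) − ψ_{E,c}(λ) Σ_{i=1}^t (δ̂_i − γ_i)² ), with L_0(λ) = 1, is a nonnegative supermartingale with respect to (𝒢_t). -/

import Mathlib

/-!
Write `L_t` as the product of the factors `exp (λ (δ̂ᵢ - δᵢ) - ψ_{E,c}(λ) (δ̂ᵢ - γᵢ)²)`. Fan's inequality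
`exp (λ y - ψ_{E,c}(λ) y²) ≤ 1 + λ y` for `y ≥ -c`, applied to `y = δ̂ₜ - γₜ`, bounds the factor by
`e^{λ (γₜ - δₜ)} (1 + λ (δ̂ₜ - γₜ))`. Given `𝒢ₜ₋₁` this majorant has conditional expectation
`e^{-u} (1 + u) ≤ 1` with `u = λ (δₜ - γₜ)`, and a product of nonnegative bounded factors whose
conditional expectations are at most `1` is a supermartingale.
-/

open MeasureTheory Set

/-- The sub-exponential cumulant generating function with scale `c`:
`ψ_{E,c}(λ) = c⁻²(−log(1−cλ) − cλ)` for `λ ∈ [0, 1/c)`. -/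
noncomputable def psiE (c l : ℝ) : ℝ := (-Real.log (1 - c * l) - c * l) / c ^ 2

namespace Real

theorem hasSum_pow_add_two_div_neg_log_one_sub_sub {x : ℝ} (h : |x| < 1) :
    HasSum (fun n : ℕ => x ^ (n + 2) / (n + 2)) (-log (1 - x) - x) := by
  have h₁ := (hasSum_nat_add_iff' 1).2 (hasSum_pow_div_log_of_abs_lt_one h)
  norm_num [add_assoc] at h₁
  exact h₁

theorem sq_div_two_le_neg_log_one_sub_sub {x : ℝ} (h₀ : 0 ≤ x) (h₁ : x < 1) :
    x ^ 2 / 2 ≤ -log (1 - x) - x := by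
  simpa using le_hasSum (hasSum_pow_add_two_div_neg_log_one_sub_sub (abs_lt.2 ⟨by linarith, h₁⟩))
    0 fun n _ => by positivity

theorem neg_log_one_sub_mul_sub_mul_le {s x : ℝ} (hs₀ : 0 ≤ s) (hs₁ : s ≤ 1) (hx₀ : 0 ≤ x)
    (hx₁ : x < 1) : -log (1 - s * x) - s * x ≤ s ^ 2 * (-log (1 - x) - x) := by
  have hx : |x| < 1 := abs_lt.2 ⟨by linarith, hx₁⟩
  have hsx : |s * x| < 1 := by
    rw [abs_mul, abs_of_nonneg hs₀]; nlinarith [abs_nonneg x]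
  refine hasSum_le (fun n => ?_) (hasSum_pow_add_two_div_neg_log_one_sub_sub hsx)
    ((hasSum_pow_add_two_div_neg_log_one_sub_sub hx).mul_left (s ^ 2))
  rw [mul_pow, pow_add s, mul_comm (s ^ n), mul_assoc, mul_div_assoc]
  gcongr
  calc s ^ n * x ^ (n + 2) ≤ 1 * x ^ (n + 2) := by gcongr; exact pow_le_one₀ hs₀ hs₁
    _ = _ := one_mul _

theorem exp_neg_mul_one_add_le_one (u : ℝ) : exp (-u) * (1 + u) ≤ 1 := by
  calc exp (-u) * (1 + u) ≤ exp (-u) * exp u := by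
        gcongr; linarith [add_one_le_exp u]
    _ = 1 := by rw [← exp_add, neg_add_cancel, exp_zero]

end Real

theorem sq_div_two_le_psiE {c l : ℝ} (hc : 0 < c) (hl : 0 ≤ l) (hcl : c * l < 1) :
    l ^ 2 / 2 ≤ psiE c l := by
  rw [psiE, le_div_iff₀ (by positivity)]
  nlinarith [Real.sq_div_two_le_neg_log_one_sub_sub (by positivity : 0 ≤ c * l) hcl]

/-- Fan's inequality. For `y ≥ 0` it follows from `ψ_{E,c}(λ) ≥ λ²/2`; for `y < 0` from comparing
the power series of `-log (1 - x) - x` at `x = -λ y` and at `x = c λ`. -/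
theorem exp_mul_sub_psiE_mul_sq_le {c l y : ℝ} (hc : 0 < c) (hl : 0 ≤ l) (hcl : c * l < 1)
    (hy : -c ≤ y) : Real.exp (l * y - psiE c l * y ^ 2) ≤ 1 + l * y := by
  have hly : -1 < l * y := by nlinarith
  rw [← Real.le_log_iff_exp_le (by linarith)]
  rcases le_total 0 y with hy₀ | hy₀
  · have h := Real.le_log_one_add_of_nonneg (mul_nonneg hl hy₀)
    have h₂ : l * y - (l * y) ^ 2 / 2 ≤ 2 * (l * y) / (l * y + 2) := by
      rw [le_div_iff₀ (by positivity)]; nlinarith [mul_nonneg hl hy₀]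
    nlinarith [sq_div_two_le_psiE hc hl hcl, sq_nonneg y]
  · have h := Real.neg_log_one_sub_mul_sub_mul_le (s := -y / c) (x := c * l)
      (div_nonneg (by linarith) hc.le) (by rw [div_le_one hc]; linarith) (by positivity) hcl
    have e₁ : -y / c * (c * l) = -(l * y) := by field_simp
    have e₂ : (-y / c) ^ 2 * (-Real.log (1 - c * l) - c * l) = psiE c l * y ^ 2 := by
      rw [psiE]; field_simp
    rw [e₁, e₂] at h
    simp only [sub_neg_eq_add] at h
    linarith

namespace MeasureTheory

variable {Ω : Type*} {m m0 : MeasurableSpace Ω} {μ : Measure Ω}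

theorem condExp_add_const_mul (hm : m ≤ m0) [SigmaFinite (μ.trim hm)] {A X : Ω → ℝ}
    (hA : StronglyMeasurable[m] A) (hA_int : Integrable A μ) (hX : Integrable X μ) (b : ℝ) :
    μ[fun ω => A ω + b * X ω | m] =ᵐ[μ] fun ω => A ω + b * μ[X | m] ω := by
  have hsum := condExp_add hA_int (hX.const_mul b) m
  rw [condExp_of_stronglyMeasurable hm hA hA_int] at hsum
  filter_upwards [hsum, condExp_smul (m := m) (μ := μ) b X] with ω h₁ h₂
  simp only [Pi.add_apply, Pi.smul_apply, smul_eq_mul] at h₁ h₂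
  rw [← h₂]; exact h₁

theorem ae_abs_le_of_condExp_ae_eq {X Y : Ω → ℝ} {R : ℝ} (hX : ∀ᵐ ω ∂μ, |X ω| ≤ R)
    (hXY : μ[X | m] =ᵐ[μ] Y) : ∀ᵐ ω ∂μ, |Y ω| ≤ R := by
  filter_upwards [hXY, ae_bdd_abs_condExp_of_ae_bdd_abs (m := m) hX] with ω h₁ h₂
  rwa [← h₁]

theorem supermartingale_prod_Icc [IsFiniteMeasure μ] {𝒢 : Filtration ℕ m0} {g : ℕ → Ω → ℝ}
    {K : ℝ} (hg_meas : ∀ t, 1 ≤ t → StronglyMeasurable[𝒢 t] (g t))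
    (hg_nonneg : ∀ t ω, 0 ≤ g t ω) (hg_le : ∀ t, 1 ≤ t → ∀ᵐ ω ∂μ, g t ω ≤ K)
    (hg_condExp : ∀ t, μ[g (t + 1) | 𝒢 t] ≤ᵐ[μ] 1) :
    Supermartingale (fun t ω => ∏ i ∈ Finset.Icc 1 t, g i ω) 𝒢 μ := by
  set F : ℕ → Ω → ℝ := fun t ω => ∏ i ∈ Finset.Icc 1 t, g i ω with hF
  have hF_succ : ∀ t, F (t + 1) = F t * g (t + 1) := fun t => by
    ext ω; exact Finset.prod_Icc_succ_top (Nat.le_add_left 1 t) _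
  have hF_nonneg : ∀ t ω, 0 ≤ F t ω := fun t ω => Finset.prod_nonneg fun i _ => hg_nonneg i ω
  have hF_meas : StronglyAdapted 𝒢 F := fun t =>
    Finset.stronglyMeasurable_fun_prod _ fun i hi =>
      (hg_meas i (Finset.mem_Icc.1 hi).1).mono (𝒢.mono (Finset.mem_Icc.1 hi).2)
  have hg_norm : ∀ t, ∀ᵐ ω ∂μ, ‖g (t + 1) ω‖ ≤ |K| := fun t => by
    filter_upwards [hg_le (t + 1) (Nat.le_add_left 1 t)] with ω h
    rw [Real.norm_of_nonneg (hg_nonneg _ ω)]; exact h.trans (le_abs_self K)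
  have hF_norm : ∀ t, ∀ᵐ ω ∂μ, ‖F t ω‖ ≤ |K| ^ t := by
    intro t
    induction t with
    | zero => exact ae_of_all _ fun ω => by simp [hF]
    | succ t ih =>
      filter_upwards [ih, hg_norm t] with ω hF hg
      rw [hF_succ, Pi.mul_apply, norm_mul, pow_succ]
      exact mul_le_mul hF hg (norm_nonneg _) (pow_nonneg (abs_nonneg K) t)
  have hF_int : ∀ t, Integrable (F t) μ := fun t =>
    .of_bound ((hF_meas t).mono (𝒢.le t)).aestronglyMeasurable _ (hF_norm t)
  refine supermartingale_nat hF_meas hF_int fun t => ?_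
  have hg_int : Integrable (g (t + 1)) μ :=
    .of_bound ((hg_meas _ (Nat.le_add_left 1 t)).mono (𝒢.le _)).aestronglyMeasurable _ (hg_norm t)
  rw [hF_succ]
  filter_upwards [condExp_stronglyMeasurable_mul_of_bound (𝒢.le t) (hF_meas t) hg_int _ (hF_norm t),
    hg_condExp t] with ω h_pull h_le
  rw [h_pull, Pi.mul_apply]
  simpa using mul_le_mul_of_nonneg_left h_le (hF_nonneg t ω)

end MeasureTheory

section

variable {Ω : Type*} {m m0 : MeasurableSpace Ω} {μ : Measure Ω}

theorem condExp_exp_bernstein_le_one [IsFiniteMeasure μ] (hm : m ≤ m0) {c l : ℝ} (hc : 0 < c)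
    (hl : 0 ≤ l) (hcl : c * l < 1) {X Y Z : Ω → ℝ} (hX : Measurable X)
    (hX_abs : ∀ᵐ ω ∂μ, |X ω| ≤ c / 2) (hY : Measurable[m] Y) (hZ : Measurable[m] Z)
    (hZ_abs : ∀ᵐ ω ∂μ, |Z ω| ≤ c / 2) (hXY : μ[X | m] =ᵐ[μ] Y) :
    μ[fun ω => Real.exp (l * (X ω - Y ω) - psiE c l * (X ω - Z ω) ^ 2) | m] ≤ᵐ[μ] 1 := by
  have hY_abs := ae_abs_le_of_condExp_ae_eq hX_abs hXY
  set e : Ω → ℝ := fun ω => Real.exp (l * (Z ω - Y ω)) with he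
  set f : Ω → ℝ := fun ω => Real.exp (l * (X ω - Z ω) - psiE c l * (X ω - Z ω) ^ 2) with hf
  have hsplit : (fun ω => Real.exp (l * (X ω - Y ω) - psiE c l * (X ω - Z ω) ^ 2)) = e * f := by
    ext ω; simp only [he, hf, Pi.mul_apply, ← Real.exp_add]; ring_nf
  have he_meas : StronglyMeasurable[m] e := (by fun_prop : Measurable[m] e).stronglyMeasurable
  have he_bdd : ∀ᵐ ω ∂μ, ‖e ω‖ ≤ Real.exp (l * c) := by
    filter_upwards [hY_abs, hZ_abs] with ω hYω hZω
    rw [Real.norm_of_nonneg (Real.exp_pos _).le, Real.exp_le_exp]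
    have := abs_le.1 hYω; have := abs_le.1 hZω
    nlinarith
  have hA_meas : StronglyMeasurable[m] (fun ω => 1 - l * Z ω) :=
    (by fun_prop : Measurable[m] (fun ω => 1 - l * Z ω)).stronglyMeasurable
  have hZ₀ : Measurable Z := hZ.mono hm le_rfl
  have hA_int : Integrable (fun ω => 1 - l * Z ω) μ :=
    (integrable_const 1).sub ((Integrable.of_bound hZ₀.aestronglyMeasurable _ hZ_abs).const_mul l)
  have hX_int : Integrable X μ := .of_bound hX.aestronglyMeasurable (c / 2) hX_abs
  have hmaj_int : Integrable (fun ω => 1 - l * Z ω + l * X ω) μ := hA_int.add (hX_int.const_mul l)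
  have hf_le : f ≤ᵐ[μ] fun ω => 1 - l * Z ω + l * X ω := by
    filter_upwards [hX_abs, hZ_abs] with ω hXω hZω
    have := abs_le.1 hXω; have := abs_le.1 hZω
    have h := exp_mul_sub_psiE_mul_sq_le hc hl hcl (y := X ω - Z ω) (by linarith)
    simp only [hf]; linarith
  have hf_int : Integrable f μ := by
    refine hmaj_int.mono' (by rw [hf]; fun_prop : Measurable f).aestronglyMeasurable ?_
    filter_upwards [hf_le] with ω h
    rwa [Real.norm_of_nonneg (Real.exp_pos _).le]
  rw [hsplit]
  filter_upwards [condExp_stronglyMeasurable_mul_of_bound hm he_meas hf_int _ he_bdd,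
    condExp_mono (m := m) hf_int hmaj_int hf_le, condExp_add_const_mul hm hA_meas hA_int hX_int l, hXY]
    with ω h_pull h_mono h_affine h_XY
  rw [h_pull, Pi.mul_apply, Pi.one_apply]
  calc e ω * μ[f | m] ω ≤ e ω * (1 - l * Z ω + l * Y ω) :=
        mul_le_mul_of_nonneg_left (h_XY ▸ h_affine ▸ h_mono) (Real.exp_pos _).le
    _ = Real.exp (-(l * (Y ω - Z ω))) * (1 + l * (Y ω - Z ω)) := by simp only [he]; ring_nf
    _ ≤ 1 := Real.exp_neg_mul_one_add_le_one _

end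

theorem empirical_bernstein_supermartingale_general
    {Ω : Type*} {m0 : MeasurableSpace Ω} {P : Measure Ω} [IsProbabilityMeasure P]
    (𝒢 : Filtration ℕ m0)
    (c : ℝ) (hc : 0 < c)
    (δhat δ γ : ℕ → Ω → ℝ)
    (hδhat_adapted : ∀ t : ℕ, 1 ≤ t → Measurable[𝒢 t] (δhat t))
    (hδ_pred : ∀ t : ℕ, 1 ≤ t → Measurable[𝒢 (t - 1)] (δ t))
    (hγ_pred : ∀ t : ℕ, 1 ≤ t → Measurable[𝒢 (t - 1)] (γ t))
    (hγ_mem : ∀ t ω, γ t ω ∈ Icc (-(c / 2)) (c / 2))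
    (hcond : ∀ t : ℕ, 1 ≤ t → P[δhat t | 𝒢 (t - 1)] =ᵐ[P] δ t)
    (habs : ∀ t : ℕ, 1 ≤ t → ∀ᵐ ω ∂P, |δhat t ω| ≤ c / 2) :
    ∀ l : ℝ, l ∈ Ico (0:ℝ) (1 / c) →
      Supermartingale
        (fun t ω => Real.exp
          (l * (∑ i ∈ Finset.Icc 1 t, (δhat i ω - δ i ω))
            - psiE c l * ∑ i ∈ Finset.Icc 1 t, (δhat i ω - γ i ω) ^ 2)) 𝒢 P ∧
      (∀ t ω, 0 ≤ Real.exp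
          (l * (∑ i ∈ Finset.Icc 1 t, (δhat i ω - δ i ω))
            - psiE c l * ∑ i ∈ Finset.Icc 1 t, (δhat i ω - γ i ω) ^ 2)) ∧
      (∀ ω : Ω, Real.exp
          (l * (∑ i ∈ Finset.Icc 1 0, (δhat i ω - δ i ω))
            - psiE c l * ∑ i ∈ Finset.Icc 1 0, (δhat i ω - γ i ω) ^ 2) = 1) := by
  rintro l ⟨hl, hlc⟩
  have hcl : c * l < 1 := by rwa [lt_div_iff₀' hc] at hlc
  have hpred_meas : ∀ {X : ℕ → Ω → ℝ} {t}, 1 ≤ t → Measurable[𝒢 (t - 1)] (X t) →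
      Measurable[𝒢 t] (X t) := fun _ h => h.mono (𝒢.mono (Nat.sub_le _ 1)) le_rfl
  refine ⟨?_, fun t ω => (Real.exp_pos _).le, fun ω => by simp⟩
  have hprod := supermartingale_prod_Icc (μ := P) (𝒢 := 𝒢) (K := Real.exp (l * c))
    (g := fun i ω => Real.exp (l * (δhat i ω - δ i ω) - psiE c l * (δhat i ω - γ i ω) ^ 2))
    (fun t ht => ?_) (fun t ω => (Real.exp_pos _).le) (fun t ht => ?_) (fun t => ?_)
  · convert hprod using 3 with t ω
    rw [Finset.mul_sum, Finset.mul_sum, ← Finset.sum_sub_distrib, Real.exp_sum]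
  · have := hδhat_adapted t ht
    have := hpred_meas ht (hδ_pred t ht)
    have := hpred_meas ht (hγ_pred t ht)
    exact Measurable.stronglyMeasurable (by fun_prop)
  · filter_upwards [habs t ht, ae_abs_le_of_condExp_ae_eq (habs t ht) (hcond t ht)] with ω hX hY
    rw [Real.exp_le_exp]
    have := abs_le.1 hX; have := abs_le.1 hY
    nlinarith [sq_div_two_le_psiE hc hl hcl, sq_nonneg (δhat t ω - γ t ω)]
  · exact condExp_exp_bernstein_le_one (𝒢.le t) hc hl hcl
      ((hδhat_adapted _ t.succ_pos).mono (𝒢.le _) le_rfl) (habs _ t.succ_pos)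
      (hδ_pred _ t.succ_pos) (hγ_pred _ t.succ_pos) (ae_of_all _ fun ω => abs_le.2 (hγ_mem _ ω))
      (hcond _ t.succ_pos)

/-- **The empirical-Bernstein exponential process is a nonnegative supermartingale.**
Let `c > 0`.  Suppose `E[δ̂_t | 𝒢_{t−1}] = δ_t` and `|δ̂_t| ≤ c/2` a.s. for every `t ≥ 1`,
and let `(γ_t)_{t≥1}` be a `[−c/2, c/2]`-valued predictable process.  Then for every
`λ ∈ [0, 1/c)` the process
`L_t(λ) = exp(λ Σ_{i=1}^t (δ̂_i − δ_i) − ψ_{E,c}(λ) Σ_{i=1}^t (δ̂_i − γ_i)²)`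
(with `L_0(λ) = 1`) is a nonnegative supermartingale with respect to `(𝒢_t)`. -/
theorem empirical_bernstein_supermartingale
    {Ω : Type*} {m0 : MeasurableSpace Ω} {P : Measure Ω} [IsProbabilityMeasure P]
    (𝒢 : Filtration ℕ m0)
    (c : ℝ) (hc : 0 < c)
    (δhat δ γ : ℕ → Ω → ℝ)
    (hδhat_adapted : ∀ t : ℕ, 1 ≤ t → Measurable[𝒢 t] (δhat t))
    (hδhat_bdd : ∃ C : ℝ, ∀ t ω, |δhat t ω| ≤ C)
    (hδ_pred : ∀ t : ℕ, 1 ≤ t → Measurable[𝒢 (t - 1)] (δ t))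
    (hδ_bdd : ∃ C : ℝ, ∀ t ω, |δ t ω| ≤ C)
    (hγ_pred : ∀ t : ℕ, 1 ≤ t → Measurable[𝒢 (t - 1)] (γ t))
    (hγ_mem : ∀ t ω, γ t ω ∈ Icc (-(c / 2)) (c / 2))
    (hcond : ∀ t : ℕ, 1 ≤ t → P[δhat t | 𝒢 (t - 1)] =ᵐ[P] δ t)
    (habs : ∀ t : ℕ, 1 ≤ t → ∀ᵐ ω ∂P, |δhat t ω| ≤ c / 2) :
    ∀ l : ℝ, l ∈ Ico (0:ℝ) (1 / c) →
      Supermartingale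
        (fun t ω => Real.exp
          (l * (∑ i ∈ Finset.Icc 1 t, (δhat i ω - δ i ω))
            - psiE c l * ∑ i ∈ Finset.Icc 1 t, (δhat i ω - γ i ω) ^ 2)) 𝒢 P ∧
      (∀ t ω, 0 ≤ Real.exp
          (l * (∑ i ∈ Finset.Icc 1 t, (δhat i ω - δ i ω))
            - psiE c l * ∑ i ∈ Finset.Icc 1 t, (δhat i ω - γ i ω) ^ 2)) ∧
      (∀ ω : Ω, Real.exp
          (l * (∑ i ∈ Finset.Icc 1 0, (δhat i ω - δ i ω))
            - psiE c l * ∑ i ∈ Finset.Icc 1 0, (δhat i ω - γ i ω) ^ 2) = 1) :=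
  empirical_bernstein_supermartingale_general 𝒢 c hc δhat δ γ hδhat_adapted hδ_pred hγ_pred hγ_mem
    hcond habs
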